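/- arXiv:1803.04657 — 7 statements merged into one kernel-verified Lean document; each statement's English description precedes it below -/
import Mathlib

section
/- For every real number α < 0, h(α) < 0; that is, 5·6^α + 8^α < 2·5^α + 4·7^α. -/
/-!
Put `φ t = t ^ α` and let `Δ` be the unit forward difference. Then `h α = Δ³φ 5 - Δ²φ 5`.
For `α < 0` the function `φ` is strictly convex on `(0, ∞)`, so `Δ²φ > 0`, and `φ'` is strictly
concave there, so `Δ²φ' < 0`. As `Δ²φ'` is the derivative of `Δ²φ`, the latter is strictly
decreasing, that is, `Δ³φ < 0`.
-/

noncomputable def f (α : ℝ) : ℝ := 2 * (5:ℝ) ^ α - 6 * (6:ℝ) ^ α + 4 * (7:ℝ) ^ α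
noncomputable def g (α : ℝ) : ℝ := 2 * (6:ℝ) ^ α - (5:ℝ) ^ α - (7:ℝ) ^ α
noncomputable def h (α : ℝ) : ℝ := 5 * (6:ℝ) ^ α - 2 * (5:ℝ) ^ α - 4 * (7:ℝ) ^ α + (8:ℝ) ^ α

open Set fwdDiff

lemma fwdDiff_iter_two {M G : Type*} [AddCommMonoid M] [AddCommGroup G] (d : M) (f : M → G)
    (x : M) : Δ_[d] ^[2] f x = f (x + d + d) - 2 • f (x + d) + f x := by
  simp only [Function.iterate_succ_apply', Function.iterate_zero_apply, fwdDiff, two_nsmul]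
  abel

section Convexity

variable {𝕜 : Type*} [Field 𝕜] [LinearOrder 𝕜] [IsStrictOrderedRing 𝕜] {s : Set 𝕜} {φ : 𝕜 → 𝕜}
  {x d : 𝕜}

lemma StrictConvexOn.fwdDiff_iter_two_pos (hφ : StrictConvexOn 𝕜 s φ)
    (hx : x ∈ s) (hxd : x + d + d ∈ s) (hd : d ≠ 0) : 0 < Δ_[d] ^[2] φ x := by
  have hmid := hφ.2 hx hxd (by intro hxx; apply hd; linarith) (by norm_num : (0:𝕜) < 1 / 2)
    (by norm_num : (0:𝕜) < 1 / 2) (by norm_num)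
  have hmidpoint : (1 / 2 : 𝕜) • x + (1 / 2 : 𝕜) • (x + d + d) = x + d := by
    simp only [smul_eq_mul]; ring
  rw [hmidpoint, smul_eq_mul, smul_eq_mul] at hmid
  rw [fwdDiff_iter_two, two_nsmul]
  linarith

lemma StrictConcaveOn.fwdDiff_iter_two_neg (hφ : StrictConcaveOn 𝕜 s φ)
    (hx : x ∈ s) (hxd : x + d + d ∈ s) (hd : d ≠ 0) : Δ_[d] ^[2] φ x < 0 := by
  have := (neg_strictConvexOn_iff.2 hφ).fwdDiff_iter_two_pos hx hxd hd
  simp only [fwdDiff_iter_two, Pi.neg_apply, two_nsmul] at this ⊢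
  linarith

end Convexity

lemma HasDerivAt.fwdDiff {𝕜 E : Type*} [NontriviallyNormedField 𝕜] [NormedAddCommGroup E]
    [NormedSpace 𝕜 E] {f f' : 𝕜 → E} {d y : 𝕜} (hshift : HasDerivAt f (f' (y + d)) (y + d))
    (hf : HasDerivAt f (f' y) y) : HasDerivAt (Δ_[d] f) (Δ_[d] f' y) y :=
  (hshift.comp_add_const y d).sub hf

theorem fwdDiff_iter_three_neg_of_strictConcaveOn_deriv {φ : ℝ → ℝ} {a d x : ℝ} (hd : 0 < d)
    (hx : a < x) (hφ : DifferentiableOn ℝ φ (Ioi a)) (hφ' : StrictConcaveOn ℝ (Ioi a) (deriv φ)) :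
    Δ_[d] ^[3] φ x < 0 := by
  have hφd : ∀ y, a < y → HasDerivAt φ (deriv φ y) y := fun y hy =>
    ((hφ y hy).differentiableAt (Ioi_mem_nhds hy)).hasDerivAt
  have hΔ : ∀ y, a < y → HasDerivAt (Δ_[d] φ) (Δ_[d] (deriv φ) y) y := fun y hy =>
    (hφd (y + d) (by linarith)).fwdDiff (hφd y hy)
  have hψ : ∀ y, a < y → HasDerivAt (Δ_[d] ^[2] φ) (Δ_[d] ^[2] (deriv φ) y) y := fun y hy =>
    (hΔ (y + d) (by linarith)).fwdDiff (hΔ y hy)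
  have hanti : StrictAntiOn (Δ_[d] ^[2] φ) (Ioi a) := by
    refine strictAntiOn_of_deriv_neg (convex_Ioi a)
      (fun y hy => (hψ y hy).continuousAt.continuousWithinAt) fun y hy => ?_
    rw [interior_Ioi] at hy
    rw [(hψ y hy).deriv]
    exact hφ'.fwdDiff_iter_two_neg hy (by simp only [mem_Ioi] at hy ⊢; linarith) hd.ne'
  rw [Function.iterate_succ_apply']
  exact sub_neg.2 (hanti hx (by simp only [mem_Ioi]; linarith) (by linarith))

theorem strictConvexOn_rpow_of_neg {p : ℝ} (hp : p < 0) :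
    StrictConvexOn ℝ (Ioi 0) fun x : ℝ => x ^ p := by
  refine strictConvexOn_of_deriv2_pos' (convex_Ioi 0)
    (fun x hx => (Real.continuousAt_rpow_const x p (Or.inl (ne_of_gt hx))).continuousWithinAt)
    fun x hx => ?_
  have hpoch : (descPochhammer ℝ 2).eval p = p * (p - 1) := by simp [descPochhammer_succ_eval]
  rw [Real.iter_deriv_rpow_const, hpoch]
  exact mul_pos (mul_pos_of_neg_of_neg hp (by linarith)) (Real.rpow_pos_of_pos hx _)

theorem strictConcaveOn_deriv_rpow_of_neg {p : ℝ} (hp : p < 0) :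
    StrictConcaveOn ℝ (Ioi 0) (deriv fun x : ℝ => x ^ p) := by
  refine strictConcaveOn_of_deriv2_neg' (convex_Ioi 0) ?_ fun x hx => ?_
  · rw [Real.deriv_rpow_const']
    exact fun x hx =>
      ((Real.continuousAt_rpow_const x _ (Or.inl (ne_of_gt hx))).const_mul p).continuousWithinAt
  have hpoch : (descPochhammer ℝ 3).eval p = p * ((p - 1) * (p - 2)) := by
    simp [descPochhammer_succ_eval]; ring
  rw [← Function.iterate_succ_apply, Real.iter_deriv_rpow_const, hpoch]
  exact mul_neg_of_neg_of_pos (mul_neg_of_neg_of_pos hp (mul_pos_of_neg_of_neg (by linarith)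
    (by linarith))) (Real.rpow_pos_of_pos hx _)

/-- For every α < 0, h(α) < 0; that is, 5·6^α + 8^α < 2·5^α + 4·7^α. -/
theorem h_neg_of_neg (α : ℝ) (hα : α < 0) :
    h α < 0 ∧ 5 * (6:ℝ) ^ α + (8:ℝ) ^ α < 2 * (5:ℝ) ^ α + 4 * (7:ℝ) ^ α := by
  set φ : ℝ → ℝ := fun t => t ^ α with hφ
  have hdiff : DifferentiableOn ℝ φ (Ioi 0) := fun t ht =>
    (Real.differentiableAt_rpow_const_of_ne α (ne_of_gt ht)).differentiableWithinAt
  have hΔ2 : 0 < Δ_[1] ^[2] φ 5 :=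
    (strictConvexOn_rpow_of_neg hα).fwdDiff_iter_two_pos (by norm_num) (by norm_num) one_ne_zero
  have hΔ3 : Δ_[1] ^[3] φ 5 < 0 :=
    fwdDiff_iter_three_neg_of_strictConcaveOn_deriv one_pos (by norm_num) hdiff
      (strictConcaveOn_deriv_rpow_of_neg hα)
  have hh : h α = Δ_[1] ^[3] φ 5 - Δ_[1] ^[2] φ 5 := by
    simp only [Function.iterate_succ_apply', Function.iterate_zero_apply, fwdDiff, hφ, h]
    norm_num
    ring
  have hneg : h α < 0 := by linarith
  exact ⟨hneg, by rw [h] at hneg; linarith⟩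
end

section
/- For every real number α with −3 ≤ α < 0, f(α) < 0. -/
/-!
Dividing by `6 ^ α`, the sign of `f α` is that of `2 (5/6)^α + 4 (7/6)^α - 6`, a convex function
of `α` (a positive combination of exponentials) which vanishes at `0` and is negative at `-3`
(where it equals `2 · 216/125 + 4 · 216/343 - 6 < 0`). By convexity it stays negative on `[-3, 0)`.
-/

open Set

theorem ConvexOn.lt_of_mem_Ico {s : Set ℝ} {φ : ℝ → ℝ} (hφ : ConvexOn ℝ s φ) {a b c z : ℝ}
    (ha : a ∈ s) (hb : b ∈ s) (hz : z ∈ Ico a b) (hφa : φ a < c) (hφb : φ b ≤ c) : φ z < c := by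
  obtain ⟨haz, hzb⟩ := hz
  set t := (b - z) / (b - a) with ht
  have hba : 0 < b - a := by linarith
  have ht0 : 0 < t := div_pos (by linarith) hba
  have ht1 : 0 ≤ 1 - t := by
    rw [ht, sub_nonneg, div_le_one hba]; linarith
  have hcomb : t • a + (1 - t) • b = z := by
    simp only [ht, smul_eq_mul]; field_simp; ring
  calc φ z = φ (t • a + (1 - t) • b) := by rw [hcomb]
    _ ≤ t • φ a + (1 - t) • φ b := hφ.2 ha hb ht0.le ht1 (by ring)
    _ < t • c + (1 - t) • c := by
      simp only [smul_eq_mul]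
      exact add_lt_add_of_lt_of_le (mul_lt_mul_of_pos_left hφa ht0)
        (mul_le_mul_of_nonneg_left hφb ht1)
    _ = c := by simp only [smul_eq_mul]; ring

noncomputable def fNormalized (α : ℝ) : ℝ := 2 * (5 / 6 : ℝ) ^ α + 4 * (7 / 6 : ℝ) ^ α - 6

theorem f_eq_six_rpow_mul_fNormalized (α : ℝ) : f α = (6 : ℝ) ^ α * fNormalized α := by
  have h6 : (0 : ℝ) < 6 ^ α := Real.rpow_pos_of_pos (by norm_num) α
  rw [f, fNormalized, Real.div_rpow (by norm_num) (by norm_num),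
    Real.div_rpow (by norm_num) (by norm_num)]
  field_simp
  ring

theorem convexOn_fNormalized : ConvexOn ℝ univ fNormalized := by
  have h5 := (convexOn_rpow_left (b := 5 / 6) (by norm_num)).smul (c := (2 : ℝ)) (by norm_num)
  have h7 := (convexOn_rpow_left (b := 7 / 6) (by norm_num)).smul (c := (4 : ℝ)) (by norm_num)
  refine ((h5.add h7).add_const (-6)).congr fun α _ ↦ ?_
  simp only [fNormalized, Pi.add_apply, smul_eq_mul]
  ring

theorem fNormalized_zero : fNormalized 0 = 0 := by
  norm_num [fNormalized]

theorem fNormalized_neg_three_neg : fNormalized (-3) < 0 := by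
  rw [fNormalized, show (-3 : ℝ) = ((-3 : ℤ) : ℝ) by norm_num, Real.rpow_intCast,
    Real.rpow_intCast]
  norm_num

/-- For every α with −3 ≤ α < 0, f(α) < 0. -/
theorem f_neg_on_Ico (α : ℝ) (h1 : -3 ≤ α) (h2 : α < 0) : f α < 0 := by
  have hneg : fNormalized α < 0 :=
    convexOn_fNormalized.lt_of_mem_Ico (mem_univ _) (mem_univ _) ⟨h1, h2⟩
      fNormalized_neg_three_neg fNormalized_zero.le
  rw [f_eq_six_rpow_mul_fNormalized]
  exact mul_neg_of_pos_of_neg (Real.rpow_pos_of_pos (by norm_num) α) hneg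
end

section
/- For every real number α with −5.3 ≤ α ≤ −3.2, f(α) + g(α) < 0; that is, 5^α + 3·7^α < 4·6^α on this interval. -/
/-!
Dividing by `6 ^ α` and substituting `s = -α`, the claim becomes
`(6/5) ^ s + 3 * (6/7) ^ s < 4` for `s ∈ [3.2, 5.3]`. The left side is a positive combination of
exponentials in `s`, hence convex, so it suffices to check the two endpoints, where the rational
exponents are cleared by raising to the power of their denominators.
-/

open Set

lemma Real.rpow_natCast_div_le {x c : ℝ} (hx : 0 ≤ x) (hc : 0 ≤ c) {n d : ℕ} (hd : d ≠ 0)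
    (h : x ^ n ≤ c ^ d) : x ^ ((n : ℝ) / d) ≤ c := by
  have hpow : (x ^ ((n : ℝ) / d)) ^ d = x ^ n := by
    rw [← Real.rpow_natCast _ d, ← Real.rpow_mul hx, div_mul_cancel₀ _ (Nat.cast_ne_zero.2 hd),
      Real.rpow_natCast]
  exact le_of_pow_le_pow_left₀ hd hc (hpow ▸ h)

lemma Real.rpow_eq_div_rpow_neg_mul {a b : ℝ} (ha : 0 < a) (hb : 0 < b) (α : ℝ) :
    a ^ α = (b / a) ^ (-α) * b ^ α := by
  rw [Real.rpow_neg (by positivity), Real.div_rpow hb.le ha.le]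
  have : 0 < b ^ α := Real.rpow_pos_of_pos hb α
  field_simp

lemma convexOn_six_ratio_sum :
    ConvexOn ℝ univ (fun s : ℝ => (6/5 : ℝ) ^ s + 3 * (6/7 : ℝ) ^ s) :=
  (convexOn_rpow_left (by norm_num)).add ((convexOn_rpow_left (by norm_num)).smul (by norm_num))

lemma six_ratio_sum_lt_four {s : ℝ} (hs : s ∈ Icc (3.2 : ℝ) 5.3) :
    (6/5 : ℝ) ^ s + 3 * (6/7 : ℝ) ^ s < 4 := by
  have hleft : (6/5 : ℝ) ^ (3.2 : ℝ) + 3 * (6/7 : ℝ) ^ (3.2 : ℝ) < 4 := by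
    rw [show (3.2 : ℝ) = ((16 : ℕ) : ℝ) / (5 : ℕ) by norm_num]
    have h₁ : (6/5 : ℝ) ^ ((16 : ℕ) / (5 : ℕ) : ℝ) ≤ 1.8 :=
      Real.rpow_natCast_div_le (by norm_num) (by norm_num) (by norm_num) (by norm_num)
    have h₂ : (6/7 : ℝ) ^ ((16 : ℕ) / (5 : ℕ) : ℝ) ≤ 0.62 :=
      Real.rpow_natCast_div_le (by norm_num) (by norm_num) (by norm_num) (by norm_num)
    linarith
  have hright : (6/5 : ℝ) ^ (5.3 : ℝ) + 3 * (6/7 : ℝ) ^ (5.3 : ℝ) < 4 := by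
    rw [show (5.3 : ℝ) = ((53 : ℕ) : ℝ) / (10 : ℕ) by norm_num]
    have h₁ : (6/5 : ℝ) ^ ((53 : ℕ) / (10 : ℕ) : ℝ) ≤ 2.63 :=
      Real.rpow_natCast_div_le (by norm_num) (by norm_num) (by norm_num) (by norm_num)
    have h₂ : (6/7 : ℝ) ^ ((53 : ℕ) / (10 : ℕ) : ℝ) ≤ 0.442 :=
      Real.rpow_natCast_div_le (by norm_num) (by norm_num) (by norm_num) (by norm_num)
    linarith
  exact (convexOn_six_ratio_sum.le_max_of_mem_Icc trivial trivial hs).trans_lt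
    (max_lt hleft hright)

/-- For every α with −5.3 ≤ α ≤ −3.2, f(α) + g(α) < 0;
that is, 5^α + 3·7^α < 4·6^α on this interval. -/
theorem fg_neg_on_Icc (α : ℝ) (h1 : -5.3 ≤ α) (h2 : α ≤ -3.2) :
    f α + g α < 0 ∧ (5:ℝ) ^ α + 3 * (7:ℝ) ^ α < 4 * (6:ℝ) ^ α := by
  have hsum : (5:ℝ) ^ α + 3 * (7:ℝ) ^ α < 4 * (6:ℝ) ^ α := by
    have hs := six_ratio_sum_lt_four (s := -α) ⟨by linarith, by linarith⟩
    have h6 : 0 < (6:ℝ) ^ α := Real.rpow_pos_of_pos (by norm_num) α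
    rw [Real.rpow_eq_div_rpow_neg_mul (by norm_num : (0:ℝ) < 5) (by norm_num : (0:ℝ) < 6),
      Real.rpow_eq_div_rpow_neg_mul (by norm_num : (0:ℝ) < 7) (by norm_num : (0:ℝ) < 6)]
    nlinarith
  exact ⟨by simp only [f, g]; linarith, hsum⟩
end

section
/- For every real number α ≤ −5.6, f(α) + g(α) > 0; that is, 5^α + 3·7^α > 4·6^α on this range. -/
open Real

lemma rpow_mul_one_add_one_sub_inv_mul_le_rpow {x : ℝ} (hx : 0 < x) {t₀ t : ℝ} (ht : t₀ ≤ t) :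
    x ^ t₀ * (1 + (1 - x⁻¹) * (t - t₀)) ≤ x ^ t := by
  have hslope : (1 - x⁻¹) * (t - t₀) ≤ log x * (t - t₀) :=
    mul_le_mul_of_nonneg_right (one_sub_inv_le_log_of_pos hx) (sub_nonneg.2 ht)
  have htangent : 1 + (1 - x⁻¹) * (t - t₀) ≤ x ^ (t - t₀) := by
    rw [rpow_def_of_pos hx]
    linarith [add_one_le_exp (log x * (t - t₀))]
  calc x ^ t₀ * (1 + (1 - x⁻¹) * (t - t₀)) ≤ x ^ t₀ * x ^ (t - t₀) :=
        mul_le_mul_of_nonneg_left htangent (rpow_nonneg hx.le _)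
    _ = x ^ t := by rw [← rpow_add hx, add_sub_cancel]

lemma lt_six_div_five_rpow : (2.775 : ℝ) < (6 / 5) ^ (28 / 5 : ℝ) := by
  refine lt_of_pow_lt_pow_left₀ 5 (by positivity) ?_
  rw [← rpow_mul_natCast (by norm_num)]
  norm_num

lemma lt_six_div_seven_rpow : (0.42 : ℝ) < (6 / 7) ^ (28 / 5 : ℝ) := by
  refine lt_of_pow_lt_pow_left₀ 5 (by positivity) ?_
  rw [← rpow_mul_natCast (by norm_num)]
  norm_num

lemma six_div_seven_rpow_lt : (6 / 7) ^ (28 / 5 : ℝ) < (0.5 : ℝ) := by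
  refine lt_of_pow_lt_pow_left₀ 5 (by norm_num) ?_
  rw [← rpow_mul_natCast (by norm_num)]
  norm_num

lemma four_lt_rpow_add_three_mul_rpow {t : ℝ} (ht : 28 / 5 ≤ t) :
    4 < (6 / 5 : ℝ) ^ t + 3 * (6 / 7 : ℝ) ^ t := by
  have ha := rpow_mul_one_add_one_sub_inv_mul_le_rpow (x := 6 / 5) (by norm_num) ht
  have hb := rpow_mul_one_add_one_sub_inv_mul_le_rpow (x := 6 / 7) (by norm_num) ht
  norm_num at ha hb
  have hsum : 4 < (6 / 5 : ℝ) ^ (28 / 5 : ℝ) + 3 * (6 / 7) ^ (28 / 5 : ℝ) := by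
    linarith [lt_six_div_five_rpow, lt_six_div_seven_rpow]
  have hslope : 3 * (6 / 7 : ℝ) ^ (28 / 5 : ℝ) ≤ (6 / 5) ^ (28 / 5 : ℝ) := by
    linarith [lt_six_div_five_rpow, six_div_seven_rpow_lt]
  nlinarith [mul_nonneg (sub_nonneg.2 ht) (sub_nonneg.2 hslope)]

lemma rpow_eq_rpow_mul_div_rpow_neg {x y : ℝ} (hx : 0 < x) (hy : 0 < y) (α : ℝ) :
    x ^ α = y ^ α * (y / x) ^ (-α) := by
  rw [div_rpow hy.le hx.le, rpow_neg hy.le, rpow_neg hx.le]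
  field_simp

/-- For every α ≤ −5.6, f(α) + g(α) > 0;
that is, 5^α + 3·7^α > 4·6^α on this range. -/
theorem fg_pos_of_le (α : ℝ) (hα : α ≤ -5.6) :
    f α + g α > 0 ∧ (5:ℝ) ^ α + 3 * (7:ℝ) ^ α > 4 * (6:ℝ) ^ α := by
  have key := four_lt_rpow_add_three_mul_rpow (t := -α) (by linarith)
  have hmain : (5:ℝ) ^ α + 3 * (7:ℝ) ^ α > 4 * (6:ℝ) ^ α := by
    rw [rpow_eq_rpow_mul_div_rpow_neg (x := 5) (y := 6) (by norm_num) (by norm_num),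
      rpow_eq_rpow_mul_div_rpow_neg (x := 7) (y := 6) (by norm_num) (by norm_num)]
    linear_combination mul_lt_mul_of_pos_left key (by positivity : (0 : ℝ) < 6 ^ α)
  exact ⟨by unfold f g; linarith, hmain⟩
end

section
/- Let α < 0 be a real number with f(α) < 0 (equivalently, x0 < α < 0 where x0 ≈ −3.09997 is the root of f). Then for every length vector L with square count n(L) = n ≥ 3, one has Ψ_α(L) ≤ f(α), with equality if and only if L is the single-entry list (n). (This is the upper bound in Proposition 1: among polyomino chains in Ω_n, the linear chain L_n uniquely maximizes χ_α for x0 < α < 0.) -/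
/-- A length vector: a nonempty list of segment lengths, each at least 2. -/
def LengthVector (L : List ℕ) : Prop := L ≠ [] ∧ ∀ l ∈ L, 2 ≤ l

/-- Square count of a length vector: `l₁ + ⋯ + l_s − (s − 1)`. -/
def nSq (L : List ℕ) : ℕ := L.sum - (L.length - 1)

/-- Number of external (first or last) entries equal to 2. -/
def e2 (L : List ℕ) : ℕ :=
  ((Finset.range L.length).filter
    (fun j => (j = 0 ∨ j = L.length - 1) ∧ L.getD j 0 = 2)).card

/-- Number of internal entries (neither first nor last) equal to 2. -/
def i2 (L : List ℕ) : ℕ :=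
  ((Finset.range L.length).filter
    (fun j => j ≠ 0 ∧ j ≠ L.length - 1 ∧ L.getD j 0 = 2)).card

/-- The weight Ψ_α(L) = f(α)·s + g(α)·e₂(L) + h(α)·i₂(L). -/
noncomputable def psi (α : ℝ) (L : List ℕ) : ℝ :=
  f α * L.length + g α * e2 L + h α * i2 L

/-!
A single segment `(n)` with `n ≥ 3` has `e₂ = i₂ = 0`, so its weight is exactly `f(α)`.
Any longer vector has weight
`Ψ = f·(s - i₂ - 2) + 2f + (f + h)·i₂ + g·e₂ ≤ 2f < f`,
because for `α < 0` we have `f + h = 8^α - 6^α < 0` and `g ≤ 0`, the latter being AM–GM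
together with `(6^α)² = 36^α ≤ 35^α = 5^α · 7^α`.
-/

open Real

lemma g_nonpos {α : ℝ} (hα : α ≤ 0) : g α ≤ 0 := by
  have hsq : (6:ℝ) ^ α * (6:ℝ) ^ α ≤ (5:ℝ) ^ α * (7:ℝ) ^ α := by
    rw [← mul_rpow (by norm_num) (by norm_num), ← mul_rpow (by norm_num) (by norm_num)]
    exact rpow_le_rpow_of_nonpos (by norm_num) (by norm_num) hα
  have h5 : 0 ≤ (5:ℝ) ^ α := by positivity
  have h6 : 0 ≤ (6:ℝ) ^ α := by positivity
  have h7 : 0 ≤ (7:ℝ) ^ α := by positivity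
  unfold g
  nlinarith [sq_nonneg ((5:ℝ) ^ α - (7:ℝ) ^ α)]

lemma f_add_h_neg {α : ℝ} (hα : α < 0) : f α + h α < 0 := by
  have : (8:ℝ) ^ α < (6:ℝ) ^ α := rpow_lt_rpow_of_neg (by norm_num) (by norm_num) hα
  unfold f h
  linarith

lemma i2_le_length_sub_two (L : List ℕ) : i2 L ≤ L.length - 2 := by
  calc i2 L ≤ (Finset.Ioo 0 (L.length - 1)).card := by
        refine Finset.card_le_card fun j hj => ?_
        simp only [Finset.mem_filter, Finset.mem_range, Finset.mem_Ioo] at hj ⊢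
        omega
    _ = L.length - 2 := by simp only [Nat.card_Ioo]; omega

lemma psi_singleton (α : ℝ) {l : ℕ} (hl : l ≠ 2) : psi α [l] = f α := by
  simp [psi, e2, i2, Finset.range_one, Finset.filter_singleton, hl]

lemma psi_le_two_mul_f {α : ℝ} {L : List ℕ} (hL : 2 ≤ L.length) (hf : f α ≤ 0) (hg : g α ≤ 0)
    (hfh : f α + h α ≤ 0) : psi α L ≤ 2 * f α := by
  have hi : (i2 L : ℝ) + 2 ≤ L.length := by
    have := i2_le_length_sub_two L
    exact_mod_cast (by omega : i2 L + 2 ≤ L.length)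
  have hrest : f α * (L.length - i2 L - 2) ≤ 0 := mul_nonpos_of_nonpos_of_nonneg hf (by linarith)
  have hinner : (f α + h α) * i2 L ≤ 0 := mul_nonpos_of_nonpos_of_nonneg hfh (by positivity)
  have hext : g α * e2 L ≤ 0 := mul_nonpos_of_nonpos_of_nonneg hg (by positivity)
  unfold psi
  linarith

lemma psi_lt_f {α : ℝ} (hα : α < 0) (hf : f α < 0) {L : List ℕ} (hL : 2 ≤ L.length) :
    psi α L < f α := by
  have := psi_le_two_mul_f hL hf.le (g_nonpos hα.le) (f_add_h_neg hα).le
  linarith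

/-- Proposition 1, upper bound: if α < 0 and f(α) < 0, then every length vector
with square count n ≥ 3 satisfies Ψ_α(L) ≤ f(α), with equality iff L = (n)
(the linear chain). -/
theorem psi_le_f (α : ℝ) (hα : α < 0) (hf : f α < 0)
    (L : List ℕ) (hL : LengthVector L) (n : ℕ) (hn : nSq L = n) (hn3 : 3 ≤ n) :
    psi α L ≤ f α ∧ (psi α L = f α ↔ L = [n]) := by
  rcases L with _ | ⟨l, _ | ⟨l', rest⟩⟩
  · exact absurd rfl hL.1
  · obtain rfl : l = n := by simpa [nSq] using hn
    rw [psi_singleton α (by omega)]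
    simp
  · have hlt := psi_lt_f hα hf (L := l :: l' :: rest) (by simp)
    exact ⟨hlt.le, by simp [hlt.ne]⟩
end

section
/- Let α < 0 be a real number with f(α) = 0 (i.e., α equals the root x0 ≈ −3.09997 of f). Then for every length vector L with square count n(L) ≥ 3, one has Ψ_α(L) ≤ 0, with equality if and only if no entry of L equals 2. (This is Proposition 3: at α = x0, every polyomino chain in Ω_n satisfies χ_α(B_n) ≤ 3·6^α n + (2·4^α+2·5^α+6^α−4·7^α), with equality exactly when B_n has no segment of length 2.) -/
/-! At a root of `f` the term `f(α)·s` vanishes, so `Ψ_α(L) = g(α)·e₂(L) + h(α)·i₂(L)`.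
The identities `3g + f = 7^α − 5^α` and `h + f = 8^α − 6^α` show that `g(α)` and `h(α)` are
negative there when `α < 0`, since `b ↦ b^α` is decreasing. Hence `Ψ_α(L) ≤ 0`, with equality
exactly when both counts vanish, i.e. when no entry of `L` equals 2. -/

theorem List.mem_iff_exists_getD {α : Type*} {L : List α} {a d : α} :
    a ∈ L ↔ ∃ j < L.length, L.getD j d = a := by
  rw [List.mem_iff_getElem]
  exact exists_congr fun j => ⟨fun ⟨hj, h⟩ => ⟨hj, by rw [List.getD_eq_getElem _ _ hj, h]⟩,
    fun ⟨hj, h⟩ => ⟨hj, by rw [← List.getD_eq_getElem _ d hj, h]⟩⟩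

theorem e2_eq_zero_and_i2_eq_zero_iff (L : List ℕ) : e2 L = 0 ∧ i2 L = 0 ↔ 2 ∉ L := by
  simp only [e2, i2, Finset.card_eq_zero, Finset.filter_eq_empty_iff, Finset.mem_range,
    List.mem_iff_exists_getD (d := 0), not_exists, not_and]
  constructor
  · rintro ⟨he, hi⟩ j hj h2
    by_cases hend : j = 0 ∨ j = L.length - 1
    · exact he hj hend h2
    · push Not at hend
      exact hi hj hend.1 hend.2 h2
  · intro h
    exact ⟨fun j hj _ => h j hj, fun j hj _ _ => h j hj⟩

theorem three_mul_g_add_f (α : ℝ) : 3 * g α + f α = (7:ℝ) ^ α - (5:ℝ) ^ α := by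
  unfold f g; ring

theorem h_add_f (α : ℝ) : h α + f α = (8:ℝ) ^ α - (6:ℝ) ^ α := by
  unfold f h; ring

theorem g_neg_of_f_eq_zero {α : ℝ} (hα : α < 0) (hf : f α = 0) : g α < 0 := by
  have h75 : (7:ℝ) ^ α < (5:ℝ) ^ α := Real.rpow_lt_rpow_of_neg (by norm_num) (by norm_num) hα
  linarith [three_mul_g_add_f α]

theorem h_neg_of_f_eq_zero {α : ℝ} (hα : α < 0) (hf : f α = 0) : h α < 0 := by
  have h86 : (8:ℝ) ^ α < (6:ℝ) ^ α := Real.rpow_lt_rpow_of_neg (by norm_num) (by norm_num) hα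
  linarith [h_add_f α]

theorem psi_of_f_eq_zero {α : ℝ} (hf : f α = 0) (L : List ℕ) :
    psi α L = g α * e2 L + h α * i2 L := by
  simp [psi, hf]

theorem mul_add_mul_natCast_nonpos {a b : ℝ} (ha : a < 0) (hb : b < 0) (m n : ℕ) :
    a * m + b * n ≤ 0 ∧ (a * m + b * n = 0 ↔ m = 0 ∧ n = 0) := by
  have hm : a * m ≤ 0 := mul_nonpos_of_nonpos_of_nonneg ha.le m.cast_nonneg
  have hn : b * n ≤ 0 := mul_nonpos_of_nonpos_of_nonneg hb.le n.cast_nonneg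
  refine ⟨add_nonpos hm hn, ?_⟩
  rw [← neg_eq_zero, neg_add, add_eq_zero_iff_of_nonneg (neg_nonneg.2 hm) (neg_nonneg.2 hn),
    neg_eq_zero, neg_eq_zero, mul_eq_zero, mul_eq_zero]
  simp [ha.ne, hb.ne]

theorem psi_nonpos_at_root_general (α : ℝ) (hα : α < 0) (hf : f α = 0)
    (L : List ℕ) :
    psi α L ≤ 0 ∧ (psi α L = 0 ↔ 2 ∉ L) := by
  rw [psi_of_f_eq_zero hf, ← e2_eq_zero_and_i2_eq_zero_iff]
  exact mul_add_mul_natCast_nonpos (g_neg_of_f_eq_zero hα hf) (h_neg_of_f_eq_zero hα hf) _ _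

/-- Proposition 3: if α < 0 and f(α) = 0, then every length vector with square
count ≥ 3 satisfies Ψ_α(L) ≤ 0, with equality iff no entry of L equals 2. -/
theorem psi_nonpos_at_root (α : ℝ) (hα : α < 0) (hf : f α = 0)
    (L : List ℕ) (hL : LengthVector L) (hn3 : 3 ≤ nSq L) :
    psi α L ≤ 0 ∧ (psi α L = 0 ↔ 2 ∉ L) :=
  psi_nonpos_at_root_general α hα hf L
end

section
/- Let α < 0 be a real number with f(α) + g(α) > 0 (equivalently, α < x1 where x1 ≈ −5.46343 is the root of f+g; note that then f(α) > 0 automatically since g(α) < 0 for α < 0). Then for every length vector L with square count n(L) = n ≥ 3: (a) if n is odd, Ψ_α(L) ≤ f(α)·(n−1)/2, with equality if and only if L = (3,3,…,3) with (n−1)/2 entries; (b) if n is even, Ψ_α(L) ≤ f(α)·(n/2) + g(α), with equality if and only if L = (2,3,3,…,3) or L = (3,…,3,2), i.e., L has n/2 entries, exactly one of which equals 2, that entry is the first or the last, and all other entries equal 3. (This is the third part of Proposition 4: for α < x1 the chain Z_n† uniquely maximizes χ_α over Ω_n.) -/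
/-!
With `s` entries, `k = e₂ + i₂` of them equal to `2` and all others at least `3`, the square
count satisfies `2s < n + k`. For `α < 0` one has `f + 2g < 0` and `h < g`, so together with
`f + g > 0` also `f > 0` and `f + 2h < 0`: more segments pay, but each entry `2` costs more than
the half-segment it gains. Hence `2Ψ ≤ f (n - 1) + (f + 2g) e₂ + (f + 2h) i₂ ≤ f (n - 1)`. For `n`
even, parity forces either an entry `2` or a lost half-segment, and since `h < g` and `-f < g`
the cheapest option is a single entry `2` at an end.
-/

section Weight

variable {F G H : ℝ}

-- `2 (F m - (F s + G e + H i)) = F (2m + e + i - 2s) - (F + 2G) e - (F + 2H) i`, a sum of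
-- nonnegative terms, the last two positive as soon as `e` resp. `i` is.
theorem weight_lt_or_eq_of_two_mul_le (hF : 0 < F) (hG : F + 2 * G < 0) (hH : F + 2 * H < 0)
    {s e i m : ℕ} (hs : 2 * s ≤ 2 * m + e + i) :
    F * s + G * e + H * i < F * m ∨ (s = m ∧ e = 0 ∧ i = 0) := by
  have hsR : (2 * s : ℝ) ≤ 2 * m + e + i := by exact_mod_cast hs
  have he0 : (0 : ℝ) ≤ e := e.cast_nonneg
  have hi0 : (0 : ℝ) ≤ i := i.cast_nonneg
  rcases e.eq_zero_or_pos with rfl | he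
  · rcases i.eq_zero_or_pos with rfl | hi
    · rcases (show s ≤ m by omega).lt_or_eq with hlt | rfl
      · left
        have : (s : ℝ) < m := by exact_mod_cast hlt
        simp only [Nat.cast_zero, mul_zero, add_zero]
        exact mul_lt_mul_of_pos_left this hF
      · exact .inr ⟨rfl, rfl, rfl⟩
    · have : (1 : ℝ) ≤ i := by exact_mod_cast hi
      left; nlinarith
  · have : (1 : ℝ) ≤ e := by exact_mod_cast he
    left; nlinarith

theorem weight_lt_or_eq_of_two_mul_lt (hFG : 0 < F + G) (hG : F + 2 * G < 0) (hHG : H < G)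
    {s e i m : ℕ} (hs : 2 * s + 1 ≤ 2 * m + e + i) :
    F * s + G * e + H * i < F * m + G ∨ (s = m ∧ e = 1 ∧ i = 0) := by
  have hF : 0 < F := by linarith
  have hH : F + 2 * H < 0 := by linarith
  rcases e with _ | e
  · left
    rcases i with _ | i
    · have : (s : ℝ) + 1 ≤ m := by exact_mod_cast (show s + 1 ≤ m by omega)
      push_cast; nlinarith
    · have : (2 * s : ℝ) ≤ 2 * m + i := by exact_mod_cast (show 2 * s ≤ 2 * m + i by omega)
      push_cast
      nlinarith [mul_nonneg (by linarith : 0 ≤ -(F + 2 * H)) i.cast_nonneg]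
  · rcases weight_lt_or_eq_of_two_mul_le hF hG hH (show 2 * s ≤ 2 * m + e + i by omega) with
      hlt | ⟨rfl, rfl, rfl⟩
    · left; push_cast; linarith
    · exact .inr ⟨rfl, rfl, rfl⟩

end Weight

theorem f_add_two_mul_g_neg {α : ℝ} (hα : α < 0) : f α + 2 * g α < 0 := by
  have : (7 : ℝ) ^ α < (6 : ℝ) ^ α := Real.rpow_lt_rpow_of_neg (by norm_num) (by norm_num) hα
  unfold f g; linarith

theorem h_lt_g {α : ℝ} (hα : α < 0) (hfg : 0 < f α + g α) : h α < g α := by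
  have : (8 : ℝ) ^ α < (6 : ℝ) ^ α := Real.rpow_lt_rpow_of_neg (by norm_num) (by norm_num) hα
  unfold f g h at *; linarith

theorem List.card_filter_getD_eq_count {α : Type*} [DecidableEq α] (L : List α) (a d : α) :
    ((Finset.range L.length).filter (fun j => L.getD j d = a)).card = L.count a := by
  induction L with
  | nil => simp
  | cons b t ih =>
    rw [Finset.card_filter, List.length_cons, Finset.sum_range_succ']
    simp only [List.getD_cons_succ, List.getD_cons_zero]
    rw [← Finset.card_filter, ih, List.count_cons]
    by_cases hb : b = a <;> simp [hb]

theorem List.getD_eq_iff_getElem?_eq {α : Type*} {L : List α} {j : ℕ} {a d : α} (h : d ≠ a) :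
    L.getD j d = a ↔ L[j]? = some a := by
  rw [List.getD_eq_getElem?_getD]
  cases L[j]? <;> simp [h]

theorem le_and_eq_iff_of_lt_or {β : Type*} [PartialOrder β] {x c : β} {P : Prop}
    (h : x < c ∨ P) (hP : P → x = c) : x ≤ c ∧ (x = c ↔ P) := by
  rcases h with h | h
  · exact ⟨h.le, fun e => absurd e h.ne, fun p => hP p⟩
  · exact ⟨(hP h).le, fun _ => h, hP⟩

section LengthVectors

variable {L : List ℕ}

theorem e2_add_i2 (L : List ℕ) : e2 L + i2 L = L.count 2 := by
  rw [e2, i2, ← Finset.card_union_of_disjoint, ← List.card_filter_getD_eq_count L 2 0,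
    ← Finset.filter_or]
  · congr 1; ext j; simp only [Finset.mem_filter]; tauto
  · rw [Finset.disjoint_filter]; tauto

theorem e2_pos_iff : 0 < e2 L ↔ L.head? = some 2 ∨ L.getLast? = some 2 := by
  rw [e2, Finset.card_pos, List.head?_eq_getElem?, List.getLast?_eq_getElem?]
  simp only [Finset.Nonempty, Finset.mem_filter, Finset.mem_range,
    List.getD_eq_iff_getElem?_eq (show (0 : ℕ) ≠ 2 by norm_num)]
  constructor
  · rintro ⟨j, -, rfl | rfl, hj⟩ <;> simp [hj]
  · rintro (h | h)
    · exact ⟨0, (List.getElem?_eq_some_iff.1 h).1, .inl rfl, h⟩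
    · exact ⟨_, (List.getElem?_eq_some_iff.1 h).1, .inr rfl, h⟩

theorem three_mul_length_le_sum_add_count (h2 : ∀ l ∈ L, 2 ≤ l) :
    3 * L.length ≤ L.sum + L.count 2 := by
  induction L with
  | nil => simp
  | cons a t ih =>
    have := ih fun l hl => h2 l (List.mem_cons_of_mem a hl)
    have := h2 a List.mem_cons_self
    rw [List.count_cons]
    simp only [List.sum_cons, List.length_cons, beq_iff_eq]
    split_ifs <;> omega

theorem mem_two_three_of_sum_add_count_eq (h2 : ∀ l ∈ L, 2 ≤ l)
    (heq : L.sum + L.count 2 = 3 * L.length) : ∀ l ∈ L, l = 2 ∨ l = 3 := by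
  induction L with
  | nil => simp
  | cons a t ih =>
    have ht : ∀ l ∈ t, 2 ≤ l := fun l hl => h2 l (List.mem_cons_of_mem a hl)
    have := three_mul_length_le_sum_add_count ht
    have := h2 a List.mem_cons_self
    rw [List.count_cons] at heq
    simp only [List.sum_cons, List.length_cons, beq_iff_eq] at heq
    simp only [List.mem_cons, forall_eq_or_imp]
    exact ⟨by split_ifs at heq <;> omega, ih ht (by split_ifs at heq <;> omega)⟩

namespace LengthVector

theorem nSq_add_length (hL : LengthVector L) : nSq L + L.length = L.sum + 1 := by
  have := List.length_pos_iff.2 hL.1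
  have := three_mul_length_le_sum_add_count hL.2
  have := List.count_le_length (a := 2) (l := L)
  unfold nSq; omega

theorem length_lt_nSq (hL : LengthVector L) : L.length < nSq L := by
  have := hL.nSq_add_length
  have := three_mul_length_le_sum_add_count hL.2
  have := List.count_le_length (a := 2) (l := L)
  omega

theorem two_mul_length_lt (hL : LengthVector L) : 2 * L.length < nSq L + L.count 2 := by
  have := hL.nSq_add_length
  have := three_mul_length_le_sum_add_count hL.2
  omega

theorem mem_two_three_of_eq (hL : LengthVector L) (heq : 2 * L.length + 1 = nSq L + L.count 2) :
    ∀ l ∈ L, l = 2 ∨ l = 3 := by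
  have := hL.nSq_add_length
  exact mem_two_three_of_sum_add_count_eq hL.2 (by omega)

end LengthVector

theorem eq_replicate_three_of_count_two_eq_zero (h23 : ∀ l ∈ L, l = 2 ∨ l = 3)
    (h : L.count 2 = 0) : L = List.replicate L.length 3 :=
  List.eq_replicate_iff.2
    ⟨rfl, fun l hl => (h23 l hl).resolve_left (by rintro rfl; exact List.count_eq_zero.1 h hl)⟩

theorem eq_two_cons_replicate_three (h23 : ∀ l ∈ L, l = 2 ∨ l = 3) (h : L.count 2 = 1)
    (hhead : L.head? = some 2) : L = 2 :: List.replicate (L.length - 1) 3 := by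
  obtain _ | ⟨a, t⟩ := L
  · simp at hhead
  · obtain rfl : a = 2 := by simpa using hhead
    have ht : t.count 2 = 0 := by simpa using h
    simpa using eq_replicate_three_of_count_two_eq_zero
      (fun l hl => h23 l (List.mem_cons_of_mem 2 hl)) ht

theorem eq_replicate_three_append_two (h23 : ∀ l ∈ L, l = 2 ∨ l = 3) (h : L.count 2 = 1)
    (hlast : L.getLast? = some 2) : L = List.replicate (L.length - 1) 3 ++ [2] := by
  have := eq_two_cons_replicate_three (L := L.reverse) (by simpa using h23)
    (by rwa [List.count_reverse]) (by rwa [List.head?_reverse])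
  rw [← L.reverse_reverse, this]
  simp

end LengthVectors

section Psi

variable {α : ℝ} {L : List ℕ} {m : ℕ}

theorem psi_of_count_two_eq_zero (h : L.count 2 = 0) : psi α L = f α * L.length := by
  have := e2_add_i2 L
  simp [psi, show e2 L = 0 by omega, show i2 L = 0 by omega]

theorem psi_of_count_two_eq_one (h : L.count 2 = 1) (he : 0 < e2 L) :
    psi α L = f α * L.length + g α := by
  have := e2_add_i2 L
  simp [psi, show e2 L = 1 by omega, show i2 L = 0 by omega]

theorem psi_replicate_three (α : ℝ) (m : ℕ) : psi α (List.replicate m 3) = f α * m := by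
  simpa using psi_of_count_two_eq_zero (α := α) (L := List.replicate m 3) (by simp [List.count_replicate])

theorem psi_two_cons_replicate_three (α : ℝ) (hm : 1 ≤ m) :
    psi α (2 :: List.replicate (m - 1) 3) = f α * m + g α := by
  rw [psi_of_count_two_eq_one (by simp [List.count_replicate]) (e2_pos_iff.2 (.inl rfl))]
  simp [Nat.sub_add_cancel hm]

theorem psi_replicate_three_append_two (α : ℝ) (hm : 1 ≤ m) :
    psi α (List.replicate (m - 1) 3 ++ [2]) = f α * m + g α := by
  rw [psi_of_count_two_eq_one (by simp [List.count_replicate]) (e2_pos_iff.2 (.inr (by simp)))]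
  simp [Nat.sub_add_cancel hm]

theorem psi_lt_or_eq_of_nSq_eq_two_mul_add_one (hf : 0 < f α) (hg : f α + 2 * g α < 0)
    (hh : f α + 2 * h α < 0) (hL : LengthVector L) (hn : nSq L = 2 * m + 1) :
    psi α L < f α * m ∨ L = List.replicate m 3 := by
  have hcount := e2_add_i2 L
  have hbound := hL.two_mul_length_lt
  rcases weight_lt_or_eq_of_two_mul_le hf hg hh
    (show 2 * L.length ≤ 2 * m + e2 L + i2 L by omega) with hlt | ⟨hs, he, hi⟩
  · exact .inl hlt
  · have h23 := hL.mem_two_three_of_eq (by omega)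
    exact .inr (hs ▸ eq_replicate_three_of_count_two_eq_zero h23 (by omega))

theorem psi_lt_or_eq_of_nSq_eq_two_mul (hfg : 0 < f α + g α) (hg : f α + 2 * g α < 0)
    (hhg : h α < g α) (hL : LengthVector L) (hn : nSq L = 2 * m) :
    psi α L < f α * m + g α ∨
      L = 2 :: List.replicate (m - 1) 3 ∨ L = List.replicate (m - 1) 3 ++ [2] := by
  have hcount := e2_add_i2 L
  have hbound := hL.two_mul_length_lt
  rcases weight_lt_or_eq_of_two_mul_lt hfg hg hhg
    (show 2 * L.length + 1 ≤ 2 * m + e2 L + i2 L by omega) with hlt | ⟨rfl, he, hi⟩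
  · exact .inl hlt
  · have h23 := hL.mem_two_three_of_eq (by omega)
    have h1 : L.count 2 = 1 := by omega
    right
    rcases e2_pos_iff.1 (show 0 < e2 L by omega) with hhead | hlast
    · exact .inl (eq_two_cons_replicate_three h23 h1 hhead)
    · exact .inr (eq_replicate_three_append_two h23 h1 hlast)

end Psi

theorem psi_le_of_fg_pos_general (α : ℝ) (hα : α < 0) (hfg : 0 < f α + g α)
    (L : List ℕ) (hL : LengthVector L) (n : ℕ) (hn : nSq L = n) :
    (Odd n → psi α L ≤ f α * (((n - 1) / 2 : ℕ) : ℝ) ∧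
      (psi α L = f α * (((n - 1) / 2 : ℕ) : ℝ) ↔
        L = List.replicate ((n - 1) / 2) 3)) ∧
    (Even n → psi α L ≤ f α * ((n / 2 : ℕ) : ℝ) + g α ∧
      (psi α L = f α * ((n / 2 : ℕ) : ℝ) + g α ↔
        L = 2 :: List.replicate (n / 2 - 1) 3 ∨
        L = List.replicate (n / 2 - 1) 3 ++ [2])) := by
  have hg := f_add_two_mul_g_neg hα
  have hhg := h_lt_g hα hfg
  refine ⟨fun ⟨m, hm⟩ => ?_, fun ⟨m, hm⟩ => ?_⟩
  · rw [show (n - 1) / 2 = m by omega]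
    exact le_and_eq_iff_of_lt_or
      (psi_lt_or_eq_of_nSq_eq_two_mul_add_one (by linarith) hg (by linarith) hL (by omega))
      fun hrep => hrep ▸ psi_replicate_three α m
  · have hm1 : 1 ≤ m := by have := hL.length_lt_nSq; omega
    rw [show n / 2 = m by omega]
    refine le_and_eq_iff_of_lt_or (psi_lt_or_eq_of_nSq_eq_two_mul hfg hg hhg hL (by omega)) ?_
    rintro (rfl | rfl)
    · exact psi_two_cons_replicate_three α hm1
    · exact psi_replicate_three_append_two α hm1

/-- Proposition 4, third part: if α < 0 and f(α) + g(α) > 0, then for every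
length vector with square count n ≥ 3:
(a) n odd: Ψ_α(L) ≤ f(α)·(n−1)/2, with equality iff L = (3,…,3) with (n−1)/2
entries; (b) n even: Ψ_α(L) ≤ f(α)·(n/2) + g(α), with equality iff
L = (2,3,…,3) or (3,…,3,2) with n/2 entries. -/
theorem psi_le_of_fg_pos (α : ℝ) (hα : α < 0) (hfg : 0 < f α + g α)
    (L : List ℕ) (hL : LengthVector L) (n : ℕ) (hn : nSq L = n) (hn3 : 3 ≤ n) :
    (Odd n → psi α L ≤ f α * (((n - 1) / 2 : ℕ) : ℝ) ∧
      (psi α L = f α * (((n - 1) / 2 : ℕ) : ℝ) ↔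
        L = List.replicate ((n - 1) / 2) 3)) ∧
    (Even n → psi α L ≤ f α * ((n / 2 : ℕ) : ℝ) + g α ∧
      (psi α L = f α * ((n / 2 : ℕ) : ℝ) + g α ↔
        L = 2 :: List.replicate (n / 2 - 1) 3 ∨
        L = List.replicate (n / 2 - 1) 3 ++ [2])) :=
  psi_le_of_fg_pos_general α hα hfg L hL n hn
end
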